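/- arXiv:0711.1486 — 2 statements merged into one kernel-verified Lean document; each statement's English description precedes it below -/
import Mathlib

section
/- Let D ≥ 1, θ > 0, and let {(c_α, w_α) : α = 0,…,b} be a lattice velocity model in ℝ^D. If the model satisfies the isotropy condition of order m for every m ∈ ℕ, then for every n ∈ ℕ and all u, v ∈ ℝ^D the discrete directional moment equals the continuum directional moment: M̃^{(n)}_v(u) = M^{(n)}_v(u). (Theorem 1, directional/contracted form.) -/
open MeasureTheory Real Finset

/-- The directional continuum moment of order `n` in direction `v` of the
Maxwell–Boltzmann equilibrium distribution with unit density, fluid velocity `u`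
and temperature `θ` in dimension `D`:
`M^{(n)}_v(u) = ∫ (c·v)^n (2πθ)^{-D/2} exp(-‖c-u‖²/(2θ)) dc`. -/
noncomputable def contMoment (D : ℕ) (θ : ℝ) (u v : EuclideanSpace ℝ (Fin D)) (n : ℕ) : ℝ :=
  ∫ c : EuclideanSpace ℝ (Fin D),
    (inner ℝ c v : ℝ) ^ n *
      ((2 * π * θ) ^ (-(D : ℝ) / 2) * Real.exp (-‖c - u‖ ^ 2 / (2 * θ)))

/-- The discrete equilibrium distribution of a lattice velocity model
`{(c_α, w_α)}`: `f^eq_α(u) = w_α exp(c_α·u/θ) exp(-‖u‖²/(2θ))`. -/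
noncomputable def discEquil {D b : ℕ} (θ : ℝ) (c : Fin (b + 1) → EuclideanSpace ℝ (Fin D))
    (w : Fin (b + 1) → ℝ) (u : EuclideanSpace ℝ (Fin D)) (α : Fin (b + 1)) : ℝ :=
  w α * Real.exp ((inner ℝ (c α) u : ℝ) / θ) * Real.exp (-‖u‖ ^ 2 / (2 * θ))

/-- The discrete directional moment of order `n` in direction `v`:
`M̃^{(n)}_v(u) = ∑_α (c_α·v)^n f^eq_α(u)`. -/
noncomputable def discMoment {D b : ℕ} (θ : ℝ) (c : Fin (b + 1) → EuclideanSpace ℝ (Fin D))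
    (w : Fin (b + 1) → ℝ) (u v : EuclideanSpace ℝ (Fin D)) (n : ℕ) : ℝ :=
  ∑ α : Fin (b + 1), (inner ℝ (c α) v : ℝ) ^ n * discEquil θ c w u α

/-- The isotropy condition of order `m` for a lattice velocity model (the
contraction with `v^{⊗m}` of `E^{(m)} = θ^{m/2} Δ^{(m)}` for even `m` and
`E^{(m)} = 0` for odd `m`): for all `v`,
`∑_α w_α (c_α·v)^m = (m-1)!! θ^{m/2} ‖v‖^m` if `m` is even, and `= 0` if `m` is odd. -/
def Isotropy {D b : ℕ} (θ : ℝ) (c : Fin (b + 1) → EuclideanSpace ℝ (Fin D))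
    (w : Fin (b + 1) → ℝ) (m : ℕ) : Prop :=
  ∀ v : EuclideanSpace ℝ (Fin D),
    ∑ α : Fin (b + 1), w α * (inner ℝ (c α) v : ℝ) ^ m =
      if Even m then (Nat.doubleFactorial (m - 1) : ℝ) * θ ^ (m / 2) * ‖v‖ ^ m else 0

/-!
Completing the square, `f^eq_u(c) = e^{-‖u‖²/(2θ)} e^{c·u/θ} g(c)` with `g` the centred Gaussian
density of variance `θ`, while the discrete equilibrium has the same shape with `g` replaced by the
weights `w_α`. Expanding `e^{c·u/θ}` into its exponential series (by dominated convergence on the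
continuum side), both moments become the same series in the mixed moments
`∑ w_α (c_α·v)^n (c_α·u)^k` and `∫ (x·v)^n (x·u)^k g(x) dx`. These agree: the moment of order
`n + k` in direction `s v + u` is a polynomial in `s` whose coefficients are the mixed moments,
and by isotropy it equals the Gaussian one, `(m-1)!! θ^{m/2} ‖s v + u‖^m`, which is computed by
rotating the direction onto a coordinate axis.
-/

open scoped Nat RealInnerProductSpace

noncomputable def gaussMoment (θ : ℝ) (m : ℕ) : ℝ :=
  if Even m then ((m - 1)‼ : ℝ) * θ ^ (m / 2) else 0

@[simp]
lemma gaussMoment_zero (θ : ℝ) : gaussMoment θ 0 = 1 := by simp [gaussMoment]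

lemma integral_pow_mul_exp_neg_sq_div_of_odd {θ : ℝ} {m : ℕ} (hm : Odd m) :
    ∫ t : ℝ, t ^ m * rexp (-t ^ 2 / (2 * θ)) = 0 := by
  have h := integral_neg_eq_self (fun t : ℝ => t ^ m * rexp (-t ^ 2 / (2 * θ))) volume
  simp only [hm.neg_pow, neg_sq, neg_mul, integral_neg] at h
  linarith

lemma integral_pow_mul_exp_neg_sq_div_of_even {θ : ℝ} (hθ : 0 < θ) (k : ℕ) :
    ∫ t : ℝ, t ^ (2 * k) * rexp (-t ^ 2 / (2 * θ)) =
      ((2 * k - 1)‼ : ℝ) * θ ^ k * √(2 * π * θ) := by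
  have hb : 0 < (2 * θ)⁻¹ := by positivity
  have habs := integral_comp_abs (f := fun y : ℝ => y ^ (2 * k) * rexp (-y ^ 2 / (2 * θ)))
  simp only [(even_two_mul k).pow_abs, sq_abs] at habs
  have hhalf : ∫ y in Set.Ioi (0 : ℝ), y ^ (2 * k) * rexp (-y ^ 2 / (2 * θ)) =
      ((2 * θ)⁻¹) ^ (-((2 * k : ℕ) + 1 : ℝ) / 2) * (1 / 2) * Gamma (((2 * k : ℕ) + 1 : ℝ) / 2) := by
    rw [← integral_rpow_mul_exp_neg_mul_rpow two_pos
      (neg_one_lt_zero.trans_le (Nat.cast_nonneg _)) hb]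
    refine setIntegral_congr_fun measurableSet_Ioi fun y _ => ?_
    simp only [rpow_natCast, rpow_two]
    ring_nf
  have hk : ((2 * k : ℕ) + 1 : ℝ) / 2 = k + 1 / 2 := by push_cast; ring
  have hsqrt : √(2 * π * θ) = √(2 * θ) * √π := by rw [← sqrt_mul (by positivity)]; ring_nf
  rw [habs, hhalf, neg_div, hk, Gamma_nat_add_half, rpow_neg hb.le, inv_rpow (by positivity),
    inv_inv, rpow_add (by positivity), rpow_natCast, ← sqrt_eq_rpow, mul_pow, hsqrt]
  field_simp

lemma integral_pow_mul_gaussian {θ : ℝ} (hθ : 0 < θ) (m : ℕ) :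
    ∫ t : ℝ, t ^ m * ((2 * π * θ) ^ (-(1 : ℝ) / 2) * rexp (-t ^ 2 / (2 * θ))) =
      gaussMoment θ m := by
  simp_rw [mul_left_comm (_ ^ m), integral_const_mul, gaussMoment]
  rcases Nat.even_or_odd' m with ⟨k, rfl | rfl⟩
  · rw [integral_pow_mul_exp_neg_sq_div_of_even hθ, if_pos (even_two_mul k),
      Nat.mul_div_cancel_left k two_pos, sqrt_eq_rpow, mul_comm, mul_assoc,
      ← rpow_add (by positivity)]
    norm_num
  · rw [integral_pow_mul_exp_neg_sq_div_of_odd (odd_two_mul_add_one k),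
      if_neg (Nat.not_even_iff_odd.2 (odd_two_mul_add_one k)), mul_zero]

lemma hasSum_pow_div_factorial_rexp (y : ℝ) : HasSum (fun k => y ^ k / k !) (rexp y) := by
  rw [Real.exp_eq_exp_ℝ]; exact NormedSpace.expSeries_div_hasSum_exp y

section ExpSeries

variable {X : Type*} [MeasurableSpace X] {μ : Measure X}

lemma hasSum_integral_pow_div_factorial_mul {f h : X → ℝ} (hf : AEStronglyMeasurable f μ)
    (hh : AEStronglyMeasurable h μ) (hint : Integrable (fun x => rexp |h x| * f x) μ) :
    HasSum (fun k => ∫ x, h x ^ k / k ! * f x ∂μ) (∫ x, rexp (h x) * f x ∂μ) := by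
  refine hasSum_integral_of_dominated_convergence (fun k x => |h x| ^ k / k ! * |f x|)
    (fun k => by fun_prop) (fun k => .of_forall fun x => ?_) (.of_forall fun x => ?_) ?_
    (.of_forall fun x => (hasSum_pow_div_factorial_rexp (h x)).mul_right (f x))
  · simp
  · exact (hasSum_pow_div_factorial_rexp |h x|).summable.mul_right _
  · refine hint.norm.congr (.of_forall fun x => ?_)
    simp [tsum_mul_right, (hasSum_pow_div_factorial_rexp _).tsum_eq]

end ExpSeries

section Integrability

variable {V : Type*} [NormedAddCommGroup V] [InnerProductSpace ℝ V] [FiniteDimensional ℝ V]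
  [MeasurableSpace V] [BorelSpace V]

lemma integrable_exp_neg_mul_sq_norm {b : ℝ} (hb : 0 < b) :
    Integrable (fun x : V => rexp (-b * ‖x‖ ^ 2)) :=
  Integrable.of_integral_ne_zero <| by
    rw [GaussianFourier.integral_rexp_neg_mul_sq_norm hb]; positivity

lemma pow_mul_exp_mul_mul_exp_neg_sq_le {θ : ℝ} (hθ : 0 < θ) (p : ℕ) (a : ℝ) {t : ℝ}
    (ht : 0 ≤ t) :
    t ^ p * rexp (a * t) * rexp (-t ^ 2 / (2 * θ)) ≤
      p ! * rexp (θ * (1 + a) ^ 2) * rexp (-(4 * θ)⁻¹ * t ^ 2) := by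
  have hpow : t ^ p ≤ p ! * rexp t := by
    have := pow_div_factorial_le_exp t ht p
    rwa [div_le_iff₀ (by positivity), mul_comm] at this
  -- AM-GM: `(1 + a) t ≤ t² / (4θ) + θ (1 + a)²`
  have hamgm : t + a * t - t ^ 2 / (2 * θ) ≤ θ * (1 + a) ^ 2 + -(4 * θ)⁻¹ * t ^ 2 := by
    have h : 0 ≤ (t - 2 * θ * (1 + a)) ^ 2 / (4 * θ) := by positivity
    field_simp at h ⊢
    nlinarith [h]
  calc t ^ p * rexp (a * t) * rexp (-t ^ 2 / (2 * θ))
      ≤ p ! * rexp t * rexp (a * t) * rexp (-t ^ 2 / (2 * θ)) := by gcongr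
    _ = p ! * rexp (t + a * t - t ^ 2 / (2 * θ)) := by
      rw [sub_eq_add_neg, ← neg_div, exp_add, exp_add]; ring
    _ ≤ p ! * rexp (θ * (1 + a) ^ 2 + -(4 * θ)⁻¹ * t ^ 2) := by gcongr
    _ = p ! * rexp (θ * (1 + a) ^ 2) * rexp (-(4 * θ)⁻¹ * t ^ 2) := by
      rw [exp_add, mul_assoc]

lemma integrable_norm_pow_mul_exp_mul_exp_neg_sq {θ : ℝ} (hθ : 0 < θ) (p : ℕ) (a : ℝ) :
    Integrable (fun x : V => ‖x‖ ^ p * rexp (a * ‖x‖) * rexp (-‖x‖ ^ 2 / (2 * θ))) := by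
  refine ((integrable_exp_neg_mul_sq_norm (by positivity : 0 < (4 * θ)⁻¹)).const_mul
    (p ! * rexp (θ * (1 + a) ^ 2))).mono' (by fun_prop) (.of_forall fun x => ?_)
  rw [norm_of_nonneg (by positivity)]
  exact pow_mul_exp_mul_mul_exp_neg_sq_le hθ p a (norm_nonneg x)

end Integrability

lemma eq_of_forall_sum_pow_mul_eq {N : ℕ} {a b : ℕ → ℝ}
    (h : ∀ s : ℝ, ∑ j ∈ range N, s ^ j * a j = ∑ j ∈ range N, s ^ j * b j) {j : ℕ}
    (hj : j < N) : a j = b j := by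
  open Polynomial in
  have hp : ∑ i ∈ range N, C (a i - b i) * X ^ i = 0 := Polynomial.funext fun s => by
    simp only [eval_finsetSum, eval_mul, eval_C, eval_pow, eval_X, eval_zero]
    rw [← sub_eq_zero.2 (h s), ← sum_sub_distrib]
    exact sum_congr rfl fun i _ => by ring
  have hcoeff := congrArg (coeff · j) hp
  simp only [finsetSum_coeff, coeff_C_mul_X_pow, sum_ite_eq, mem_range, hj, if_true,
    coeff_zero] at hcoeff
  exact sub_eq_zero.1 hcoeff

lemma real_inner_smul_add_pow {F : Type*} [NormedAddCommGroup F] [InnerProductSpace ℝ F]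
    (x u v : F) (s : ℝ) (m : ℕ) :
    ⟪x, s • v + u⟫ ^ m =
      ∑ j ∈ range (m + 1), s ^ j * (m.choose j * (⟪x, v⟫ ^ j * ⟪x, u⟫ ^ (m - j))) := by
  rw [inner_add_right, real_inner_smul_right, add_pow]
  exact sum_congr rfl fun j _ => by ring

noncomputable def gaussDensity (D : ℕ) (θ : ℝ) (x : EuclideanSpace ℝ (Fin D)) : ℝ :=
  (2 * π * θ) ^ (-(D : ℝ) / 2) * rexp (-‖x‖ ^ 2 / (2 * θ))

section

variable {D b : ℕ} {θ : ℝ}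

local notation "E" => EuclideanSpace ℝ (Fin D)

@[fun_prop]
lemma continuous_gaussDensity : Continuous (gaussDensity D θ) := by
  unfold gaussDensity; fun_prop

lemma gaussDensity_toLp (hθ : 0 < θ) (y : Fin D → ℝ) :
    gaussDensity D θ (WithLp.toLp 2 y) =
      ∏ i, (2 * π * θ) ^ (-(1 : ℝ) / 2) * rexp (-y i ^ 2 / (2 * θ)) := by
  rw [prod_mul_distrib, prod_const, card_univ, Fintype.card_fin, ← rpow_natCast,
    ← rpow_mul (by positivity), ← exp_sum, ← sum_div, sum_neg_distrib, gaussDensity,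
    EuclideanSpace.norm_sq_eq]
  simp only [Real.norm_eq_abs, sq_abs]
  ring_nf

lemma integral_prod_pow_mul_gaussDensity (hθ : 0 < θ) (p : Fin D → ℕ) :
    ∫ x : E, (∏ i, x i ^ p i) * gaussDensity D θ x =
      ∏ i, gaussMoment θ (p i) := by
  rw [← (EuclideanSpace.volume_preserving_symm_measurableEquiv_toLp (Fin D)).symm.integral_comp
    (MeasurableEquiv.measurableEmbedding _)]
  simp only [MeasurableEquiv.symm_symm, MeasurableEquiv.coe_toLp, gaussDensity_toLp hθ,
    ← prod_mul_distrib]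
  rw [integral_fintype_prod_volume_eq_prod
    (fun i t => t ^ p i * ((2 * π * θ) ^ (-(1 : ℝ) / 2) * rexp (-t ^ 2 / (2 * θ))))]
  simp only [integral_pow_mul_gaussian hθ]

lemma integral_gaussDensity (hθ : 0 < θ) : ∫ x : E, gaussDensity D θ x = 1 := by
  simpa using integral_prod_pow_mul_gaussDensity hθ (D := D) 0

lemma integral_coord_pow_mul_gaussDensity (hθ : 0 < θ) (i : Fin D) (m : ℕ) :
    ∫ x : E, x i ^ m * gaussDensity D θ x = gaussMoment θ m := by
  simpa [Pi.single_apply, pow_ite, apply_ite (gaussMoment θ)] using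
    integral_prod_pow_mul_gaussDensity hθ (Pi.single i m)

lemma gaussDensity_linearIsometryEquiv_apply (T : E ≃ₗᵢ[ℝ] E) (x : E) :
    gaussDensity D θ (T x) = gaussDensity D θ x := by
  rw [gaussDensity, gaussDensity, T.norm_map]

lemma integral_comp_linearIsometryEquiv_mul_gaussDensity (T : E ≃ₗᵢ[ℝ] E) (f : E → ℝ) :
    ∫ x : E, f (T x) * gaussDensity D θ x = ∫ x : E, f x * gaussDensity D θ x := by
  simpa only [gaussDensity_linearIsometryEquiv_apply] using T.measurePreserving.integral_comp
    T.toHomeomorph.measurableEmbedding (fun x => f x * gaussDensity D θ x)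

lemma integral_inner_pow_mul_gaussDensity (hθ : 0 < θ) (m : ℕ) (z : E) :
    ∫ x : E, ⟪x, z⟫ ^ m * gaussDensity D θ x = gaussMoment θ m * ‖z‖ ^ m := by
  rcases eq_or_ne z 0 with rfl | hz
  · cases m <;> simp [integral_gaussDensity hθ, gaussMoment]
  obtain ⟨i, -⟩ : ∃ i, z i ≠ 0 := by
    by_contra! h
    exact hz (by ext i; simp [h i])
  -- a reflection turns `z` into a multiple of the `i`-th basis vector
  set e : E := ‖z‖ • EuclideanSpace.single i 1
  have he : ‖z‖ = ‖e‖ := by simp [e, norm_smul]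
  set T := (ℝ ∙ (z - e))ᗮ.reflection
  have hinner (x : E) : ⟪x, z⟫ = ⟪T x, e⟫ := by
    rw [← Submodule.reflection_sub he, LinearIsometryEquiv.inner_map_map]
  simp_rw [hinner]
  rw [integral_comp_linearIsometryEquiv_mul_gaussDensity T (fun x => ⟪x, e⟫ ^ m)]
  simp_rw [e, real_inner_smul_right, EuclideanSpace.inner_single_right, conj_trivial, one_mul,
    mul_pow, mul_assoc, integral_const_mul, integral_coord_pow_mul_gaussDensity hθ, mul_comm]

lemma integrable_mul_gaussDensity_of_abs_le (hθ : 0 < θ) {f : E → ℝ} (hf : Continuous f)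
    (p : ℕ) (C a : ℝ) (hle : ∀ x, |f x| ≤ C * (‖x‖ ^ p * rexp (a * ‖x‖))) :
    Integrable (fun x => f x * gaussDensity D θ x) := by
  refine ((integrable_norm_pow_mul_exp_mul_exp_neg_sq hθ p a).const_mul
    (C * (2 * π * θ) ^ (-(D : ℝ) / 2))).mono' (hf.mul continuous_gaussDensity).aestronglyMeasurable
    (.of_forall fun x => ?_)
  have hg : 0 < gaussDensity D θ x := by unfold gaussDensity; positivity
  calc ‖f x * gaussDensity D θ x‖ = |f x| * gaussDensity D θ x := by
        rw [norm_mul, norm_of_nonneg hg.le, Real.norm_eq_abs]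
    _ ≤ C * (‖x‖ ^ p * rexp (a * ‖x‖)) * gaussDensity D θ x := by gcongr; exact hle x
    _ = _ := by unfold gaussDensity; ring

lemma integrable_inner_pow_mul_inner_pow_mul_gaussDensity (hθ : 0 < θ) (j l : ℕ) (u v : E) :
    Integrable (fun x => ⟪x, v⟫ ^ j * ⟪x, u⟫ ^ l * gaussDensity D θ x) := by
  refine integrable_mul_gaussDensity_of_abs_le hθ (by fun_prop) (j + l) (‖v‖ ^ j * ‖u‖ ^ l) 0
    fun x => ?_
  calc |⟪x, v⟫ ^ j * ⟪x, u⟫ ^ l| = |⟪x, v⟫| ^ j * |⟪x, u⟫| ^ l := by rw [abs_mul, abs_pow, abs_pow]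
    _ ≤ (‖x‖ * ‖v‖) ^ j * (‖x‖ * ‖u‖) ^ l := by
      gcongr <;> exact abs_real_inner_le_norm _ _
    _ = _ := by rw [zero_mul, exp_zero]; ring

lemma integrable_exp_abs_inner_mul_inner_pow_mul_gaussDensity (hθ : 0 < θ) (n : ℕ) (u v : E) :
    Integrable (fun x => rexp |⟪x, u⟫ / θ| * (⟪x, v⟫ ^ n * gaussDensity D θ x)) := by
  simp_rw [← mul_assoc]
  refine integrable_mul_gaussDensity_of_abs_le hθ (by fun_prop) n (‖v‖ ^ n) (‖u‖ / θ)
    fun x => ?_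
  rw [abs_mul, abs_of_pos (exp_pos _), abs_pow, abs_div, abs_of_pos hθ]
  calc rexp (|⟪x, u⟫| / θ) * |⟪x, v⟫| ^ n ≤ rexp (‖x‖ * ‖u‖ / θ) * (‖x‖ * ‖v‖) ^ n := by
        gcongr <;> exact abs_real_inner_le_norm _ _
    _ = _ := by ring_nf

lemma Isotropy.sum_mul_inner_pow {c : Fin (b + 1) → E} {w : Fin (b + 1) → ℝ} {m : ℕ}
    (h : Isotropy θ c w m) (z : E) :
    ∑ α, w α * ⟪c α, z⟫ ^ m = gaussMoment θ m * ‖z‖ ^ m := by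
  rw [h z, gaussMoment]
  split_ifs <;> simp

lemma sum_mul_inner_smul_add_pow (c : Fin (b + 1) → E) (w : Fin (b + 1) → ℝ) (u v : E)
    (s : ℝ) (m : ℕ) :
    ∑ α, w α * ⟪c α, s • v + u⟫ ^ m = ∑ j ∈ range (m + 1),
      s ^ j * (m.choose j * ∑ α, w α * (⟪c α, v⟫ ^ j * ⟪c α, u⟫ ^ (m - j))) := by
  simp_rw [real_inner_smul_add_pow, mul_sum]
  rw [sum_comm]
  exact sum_congr rfl fun j _ => sum_congr rfl fun α _ => by ring

lemma integral_inner_smul_add_pow_mul_gaussDensity (hθ : 0 < θ) (u v : E) (s : ℝ) (m : ℕ) :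
    ∫ x, ⟪x, s • v + u⟫ ^ m * gaussDensity D θ x = ∑ j ∈ range (m + 1),
      s ^ j * (m.choose j * ∫ x, ⟪x, v⟫ ^ j * ⟪x, u⟫ ^ (m - j) * gaussDensity D θ x) := by
  simp_rw [real_inner_smul_add_pow, sum_mul]
  rw [integral_finsetSum _ fun j _ =>
    ((integrable_inner_pow_mul_inner_pow_mul_gaussDensity hθ j (m - j) u v).const_mul
      (s ^ j * m.choose j)).congr (.of_forall fun x => by ring)]
  refine sum_congr rfl fun j _ => ?_
  rw [← integral_const_mul, ← integral_const_mul]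
  exact integral_congr_ae (.of_forall fun x => by ring)

lemma Isotropy.sum_mul_inner_pow_mul_inner_pow {c : Fin (b + 1) → E} {w : Fin (b + 1) → ℝ}
    {n k : ℕ} (hiso : Isotropy θ c w (n + k)) (hθ : 0 < θ) (u v : E) :
    ∑ α, w α * (⟪c α, v⟫ ^ n * ⟪c α, u⟫ ^ k) =
      ∫ x, ⟪x, v⟫ ^ n * ⟪x, u⟫ ^ k * gaussDensity D θ x := by
  have h := eq_of_forall_sum_pow_mul_eq
    (a := fun j => (n + k).choose j * ∑ α, w α * (⟪c α, v⟫ ^ j * ⟪c α, u⟫ ^ (n + k - j)))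
    (b := fun j => (n + k).choose j * ∫ x, ⟪x, v⟫ ^ j * ⟪x, u⟫ ^ (n + k - j) * gaussDensity D θ x)
    (fun s => by
      rw [← sum_mul_inner_smul_add_pow, ← integral_inner_smul_add_pow_mul_gaussDensity hθ,
        hiso.sum_mul_inner_pow, integral_inner_pow_mul_gaussDensity hθ])
    (Nat.lt_succ_of_le (Nat.le_add_right n k))
  rwa [Nat.add_sub_cancel_left, mul_right_inj' (by exact_mod_cast (Nat.choose_pos
    (Nat.le_add_right n k)).ne')] at h

lemma contMoment_eq (hθ : 0 < θ) (u v : E) (n : ℕ) :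
    contMoment D θ u v n = rexp (-‖u‖ ^ 2 / (2 * θ)) *
      ∫ x, rexp (⟪x, u⟫ / θ) * (⟪x, v⟫ ^ n * gaussDensity D θ x) := by
  rw [contMoment, ← integral_const_mul]
  refine integral_congr_ae (.of_forall fun x => ?_)
  have hsq : -‖x - u‖ ^ 2 / (2 * θ) = -‖u‖ ^ 2 / (2 * θ) + ⟪x, u⟫ / θ + -‖x‖ ^ 2 / (2 * θ) := by
    rw [norm_sub_sq_real]; field_simp; ring
  simp only [gaussDensity, hsq, exp_add]
  ring

lemma discMoment_eq (c : Fin (b + 1) → E) (w : Fin (b + 1) → ℝ) (u v : E) (n : ℕ) :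
    discMoment θ c w u v n = rexp (-‖u‖ ^ 2 / (2 * θ)) *
      ∑ α, rexp (⟪c α, u⟫ / θ) * (w α * ⟪c α, v⟫ ^ n) := by
  rw [discMoment, mul_sum]
  exact sum_congr rfl fun α _ => by rw [discEquil]; ring

end

theorem discrete_moments_eq_continuum_moments_general
    (D b : ℕ) (θ : ℝ) (hθ : 0 < θ)
    (c : Fin (b + 1) → EuclideanSpace ℝ (Fin D)) (w : Fin (b + 1) → ℝ)
    (hiso : ∀ m : ℕ, Isotropy θ c w m) :
    ∀ (n : ℕ) (u v : EuclideanSpace ℝ (Fin D)),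
      discMoment θ c w u v n = contMoment D θ u v n := by
  intro n u v
  rw [discMoment_eq, contMoment_eq hθ]
  congr 1
  have hterm (k : ℕ) : ∑ α, (⟪c α, u⟫ / θ) ^ k / k ! * (w α * ⟪c α, v⟫ ^ n) =
      ∫ x, (⟪x, u⟫ / θ) ^ k / k ! * (⟪x, v⟫ ^ n * gaussDensity D θ x) := calc
    _ = (θ ^ k * k !)⁻¹ * ∑ α, w α * (⟪c α, v⟫ ^ n * ⟪c α, u⟫ ^ k) := by
      rw [mul_sum]; exact sum_congr rfl fun α _ => by ring
    _ = (θ ^ k * k !)⁻¹ * ∫ x, ⟪x, v⟫ ^ n * ⟪x, u⟫ ^ k * gaussDensity D θ x := by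
      rw [(hiso (n + k)).sum_mul_inner_pow_mul_inner_pow hθ]
    _ = _ := by
      rw [← integral_const_mul]; exact integral_congr_ae (.of_forall fun x => by ring)
  have hdisc := hasSum_sum fun α (_ : α ∈ univ) =>
    (hasSum_pow_div_factorial_rexp (⟪c α, u⟫ / θ)).mul_right (w α * ⟪c α, v⟫ ^ n)
  have hcont := hasSum_integral_pow_div_factorial_mul (by fun_prop)
    (by fun_prop) (integrable_exp_abs_inner_mul_inner_pow_mul_gaussDensity hθ n u v)
  exact hdisc.unique (by simpa only [hterm] using hcont)

/-- **Theorem 1 (directional form).** If a lattice velocity model satisfies the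
isotropy condition of every order `m`, then all discrete directional moments
equal the continuum directional moments of the Maxwell–Boltzmann distribution. -/
theorem discrete_moments_eq_continuum_moments
    (D b : ℕ) (hD : 1 ≤ D) (θ : ℝ) (hθ : 0 < θ)
    (c : Fin (b + 1) → EuclideanSpace ℝ (Fin D)) (w : Fin (b + 1) → ℝ)
    (hiso : ∀ m : ℕ, Isotropy θ c w m) :
    ∀ (n : ℕ) (u v : EuclideanSpace ℝ (Fin D)),
      discMoment θ c w u v n = contMoment D θ u v n :=
  discrete_moments_eq_continuum_moments_general D b θ hθ c w hiso
end

section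
/- Let D ≥ 1, θ > 0, u, v ∈ ℝ^D, and n ∈ ℕ. Then the directional continuum moment admits the derivative representation M^{(n)}_v(u) = exp(−‖u‖²/(2θ)) · θ^n · (d^n/dt^n)|_{t=0} exp(‖u + t v‖²/(2θ)), i.e. the n-th moment tensor contracted with v^{⊗n} equals exp(−‖u‖²/(2θ)) θ^n times the n-th directional derivative in direction v of exp(‖u‖²/(2θ)). -/
/-!
The Maxwellian is the Gaussian with mean `u` and covariance `θ • 1`, so by the Gaussian integral
`∫ exp (-b ‖w‖² + s ⟪w', w⟫) dw = (π / b) ^ (d / 2) exp (s² ‖w'‖² / (4 b))` the moment generating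
function of `c ↦ ⟪c, v⟫` is `t ↦ exp (⟪u, v⟫ t + θ ‖v‖² t² / 2)`, and its `n`-th derivative at `0`
is the `n`-th moment. Completing the square,
`exp (‖u + t v‖² / (2θ)) = exp (‖u‖² / (2θ)) · mgf (t / θ)`, and the rescaling `t ↦ t / θ`
produces the factor `θ ^ n`.
-/

open MeasureTheory Real Finset

open ProbabilityTheory Module
open scoped RealInnerProductSpace

section Maxwellian

variable {V : Type*} [NormedAddCommGroup V] [InnerProductSpace ℝ V]

theorem exp_norm_add_smul_sq_div {θ : ℝ} (hθ : θ ≠ 0) (u v : V) (t : ℝ) :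
    rexp (‖u + t • v‖ ^ 2 / (2 * θ)) =
      rexp (‖u‖ ^ 2 / (2 * θ)) * rexp (⟪u, v⟫ * (θ⁻¹ * t) + θ * ‖v‖ ^ 2 * (θ⁻¹ * t) ^ 2 / 2) := by
  rw [← exp_add, norm_add_sq_real, real_inner_smul_right, norm_smul, mul_pow, norm_eq_abs, sq_abs]
  congr 1
  field_simp
  ring

noncomputable def maxwellianDensity (θ : ℝ) (u c : V) : ℝ :=
  (2 * π * θ) ^ (-(finrank ℝ V : ℝ) / 2) * rexp (-‖c - u‖ ^ 2 / (2 * θ))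

variable [FiniteDimensional ℝ V] [MeasurableSpace V] [BorelSpace V]

theorem integral_rexp_neg_mul_sq_norm_add {b : ℝ} (hb : 0 < b) (c : ℝ) (w : V) :
    ∫ v : V, rexp (-b * ‖v‖ ^ 2 + c * ⟪w, v⟫) =
      (π / b) ^ (finrank ℝ V / 2 : ℝ) * rexp (c ^ 2 * ‖w‖ ^ 2 / (4 * b)) := by
  rw [← Complex.ofReal_inj, ← integral_complex_ofReal]
  push_cast
  rw [GaussianFourier.integral_cexp_neg_mul_sq_norm_add (by simpa using hb),
    ← Complex.ofReal_div, Complex.ofReal_cpow (by positivity)]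
  push_cast
  rfl

noncomputable def maxwellian (θ : ℝ) (u : V) : Measure V :=
  volume.withDensity fun c ↦ ENNReal.ofReal (maxwellianDensity θ u c)

theorem integral_maxwellian {θ : ℝ} (hθ : 0 ≤ θ) (u : V) (g : V → ℝ) :
    ∫ c, g c ∂maxwellian θ u = ∫ c, maxwellianDensity θ u c * g c := by
  have hρ : ∀ c, 0 ≤ maxwellianDensity θ u c := fun c ↦
    mul_nonneg (rpow_nonneg (by positivity) _) (exp_nonneg _)
  rw [maxwellian, integral_withDensity_eq_integral_toReal_smul
    (by unfold maxwellianDensity; fun_prop) (ae_of_all _ fun _ ↦ ENNReal.ofReal_lt_top)]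
  simp only [ENNReal.toReal_ofReal (hρ _), smul_eq_mul]

theorem mgf_inner_maxwellian {θ : ℝ} (hθ : 0 < θ) (u v : V) :
    mgf (⟪·, v⟫) (maxwellian θ u) = fun t ↦ rexp (⟪u, v⟫ * t + θ * ‖v‖ ^ 2 * t ^ 2 / 2) := by
  ext t
  rw [mgf, integral_maxwellian hθ.le, ← integral_add_right_eq_self _ u]
  have hfactor : ∀ w : V, maxwellianDensity θ u (w + u) * rexp (t * ⟪w + u, v⟫) =
      (2 * π * θ) ^ (-(finrank ℝ V : ℝ) / 2) * rexp (t * ⟪u, v⟫) *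
        rexp (-(2 * θ)⁻¹ * ‖w‖ ^ 2 + t * ⟪v, w⟫) := fun w ↦ by
    rw [maxwellianDensity, add_sub_cancel_right, inner_add_left, real_inner_comm w v, mul_add,
      mul_assoc, ← exp_add, mul_assoc (_ ^ _), ← exp_add]
    congr 2
    ring
  have hnormalize : (2 * π * θ) ^ (-(finrank ℝ V : ℝ) / 2) *
      (π / (2 * θ)⁻¹) ^ (finrank ℝ V / 2 : ℝ) = 1 := by
    rw [div_inv_eq_mul, ← mul_assoc, mul_comm π 2, neg_div, rpow_neg (by positivity),
      inv_mul_cancel₀ (by positivity)]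
  simp only [hfactor]
  rw [integral_const_mul, integral_rexp_neg_mul_sq_norm_add (by positivity),
    mul_mul_mul_comm, hnormalize, one_mul, ← exp_add]
  congr 1
  field_simp
  ring

/-- The integral of a non-integrable function is `0`, while the moment generating function is
positive. -/
theorem integrableExpSet_inner_maxwellian {θ : ℝ} (hθ : 0 < θ) (u v : V) :
    integrableExpSet (⟪·, v⟫) (maxwellian θ u) = Set.univ :=
  Set.eq_univ_of_forall fun t ↦ Integrable.of_integral_ne_zero <| by
    rw [← mgf, mgf_inner_maxwellian hθ]
    exact (exp_pos _).ne'

theorem integral_inner_pow_maxwellian {θ : ℝ} (hθ : 0 < θ) (u v : V) (n : ℕ) :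
    ∫ c, ⟪c, v⟫ ^ n ∂maxwellian θ u =
      iteratedDeriv n (fun t ↦ rexp (⟪u, v⟫ * t + θ * ‖v‖ ^ 2 * t ^ 2 / 2)) 0 := by
  rw [← mgf_inner_maxwellian hθ,
    iteratedDeriv_mgf_zero (by simp [integrableExpSet_inner_maxwellian hθ])]
  rfl

end Maxwellian

theorem contMoment_eq_integral_maxwellian {D : ℕ} {θ : ℝ} (hθ : 0 ≤ θ)
    (u v : EuclideanSpace ℝ (Fin D)) (n : ℕ) :
    contMoment D θ u v n = ∫ c, ⟪c, v⟫ ^ n ∂maxwellian θ u := by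
  rw [integral_maxwellian hθ, contMoment]
  simp only [maxwellianDensity, finrank_euclideanSpace_fin, mul_comm]

theorem continuum_moment_deriv_representation_general
    (D : ℕ) (θ : ℝ) (hθ : 0 < θ)
    (u v : EuclideanSpace ℝ (Fin D)) (n : ℕ) :
    contMoment D θ u v n =
      Real.exp (-‖u‖ ^ 2 / (2 * θ)) * θ ^ n *
        iteratedDeriv n (fun t : ℝ => Real.exp (‖u + t • v‖ ^ 2 / (2 * θ))) 0 := by
  have hsmooth : ContDiff ℝ n fun t ↦ rexp (⟪u, v⟫ * t + θ * ‖v‖ ^ 2 * t ^ 2 / 2) := by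
    fun_prop
  rw [contMoment_eq_integral_maxwellian hθ.le, integral_inner_pow_maxwellian hθ,
    funext (exp_norm_add_smul_sq_div hθ.ne' u v), iteratedDeriv_const_mul_field,
    congrFun (iteratedDeriv_comp_const_mul hsmooth θ⁻¹) 0, mul_zero]
  generalize iteratedDeriv n (fun t : ℝ ↦ rexp (⟪u, v⟫ * t + θ * ‖v‖ ^ 2 * t ^ 2 / 2)) 0 = m
  rw [neg_div, exp_neg, inv_pow]
  field_simp

/-- Derivative representation of the continuum directional moment:
`M^{(n)}_v(u) = exp(-‖u‖²/(2θ)) θ^n (d^n/dt^n)|_{t=0} exp(‖u + t v‖²/(2θ))`. -/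
theorem continuum_moment_deriv_representation
    (D : ℕ) (hD : 1 ≤ D) (θ : ℝ) (hθ : 0 < θ)
    (u v : EuclideanSpace ℝ (Fin D)) (n : ℕ) :
    contMoment D θ u v n =
      Real.exp (-‖u‖ ^ 2 / (2 * θ)) * θ ^ n *
        iteratedDeriv n (fun t : ℝ => Real.exp (‖u + t • v‖ ^ 2 / (2 * θ))) 0 :=
  continuum_moment_deriv_representation_general D θ hθ u v n
end
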